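/- arXiv:2310.03762 — 3 statements merged into one kernel-verified Lean document; each statement's English description precedes it below -/
import Mathlib

section
/- If the ULA antenna spacing satisfies 0 < Δr ≤ 1/2 and N_a ≥ 2, then for all θ_i, θ_j in the open interval (−π/2, π/2), the angular similarity attains its maximum only on the diagonal: ā(θ_i, θ_j) = 1 if and only if θ_i = θ_j. -/
open Real

/-- ULA steering vector: `a(θ)_n = (1/√N_a) · exp(2πi·Δr·(n−1)·sin θ)` for `n = 1,…,N_a`,
indexed here by `n : Fin Na` (so `(n : ℕ) = n - 1`). -/
noncomputable def ulaSteer (Δr : ℝ) (Na : ℕ) (θ : ℝ) (n : Fin Na) : ℂ :=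
  ((1 / Real.sqrt Na : ℝ) : ℂ) *
    Complex.exp (((2 * π * Δr * ((n : ℕ) : ℝ) * Real.sin θ : ℝ) : ℂ) * Complex.I)

/-- Angular similarity term `ā(θ_i, θ_j) = |⟨a(θ_i), a(θ_j)⟩|`. -/
noncomputable def abar (Δr : ℝ) (Na : ℕ) (θi θj : ℝ) : ℝ :=
  ‖∑ n : Fin Na, (starRingEnd ℂ) (ulaSteer Δr Na θi n) * ulaSteer Δr Na θj n‖

/-- Dirichlet kernel `D_N(x) = sin(x/2) / (N · sin(x/(2N)))`. -/
noncomputable def dirichlet (N : ℕ) (x : ℝ) : ℝ :=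
  Real.sin (x / 2) / ((N : ℝ) * Real.sin (x / (2 * N)))

/-! `ā(θi, θj) = |∑_{n<N} zⁿ| / N` with `z = exp(2πi·Δr·(sin θj − sin θi))` on the unit circle.
Since `|1 + z| < 2` unless `z = 1` (strict convexity of `ℂ`), the sum has modulus `N` only for
`z = 1`. Half-wavelength spacing keeps the phase `2π·Δr·(sin θj − sin θi)` inside `(−2π, 2π)`,
so `z = 1` forces `sin θi = sin θj`, and `sin` is injective on `(−π/2, π/2)`. -/

open Finset

lemma starRingEnd_ulaSteer_mul_ulaSteer (Δr : ℝ) (Na : ℕ) (θi θj : ℝ) (n : Fin Na) :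
    starRingEnd ℂ (ulaSteer Δr Na θi n) * ulaSteer Δr Na θj n =
      (Na : ℂ)⁻¹ * Complex.exp (↑(2 * π * Δr * (sin θj - sin θi)) * Complex.I) ^ (n : ℕ) := by
  have hscale : ((1 / √(Na : ℝ) : ℝ) : ℂ) * ((1 / √(Na : ℝ) : ℝ) : ℂ) = (Na : ℂ)⁻¹ := by
    rw [← Complex.ofReal_mul, div_mul_div_comm, Real.mul_self_sqrt (Nat.cast_nonneg Na)]
    push_cast
    ring
  rw [ulaSteer, ulaSteer, map_mul, Complex.conj_ofReal, ← Complex.exp_conj, mul_mul_mul_comm,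
    hscale, ← Complex.exp_add, ← Complex.exp_nat_mul, map_mul, Complex.conj_ofReal,
    Complex.conj_I]
  push_cast
  ring_nf

lemma abar_eq_norm_geom_sum_div (Δr : ℝ) (Na : ℕ) (θi θj : ℝ) :
    abar Δr Na θi θj =
      ‖∑ n ∈ range Na, Complex.exp (↑(2 * π * Δr * (sin θj - sin θi)) * Complex.I) ^ n‖ / Na := by
  simp only [abar, starRingEnd_ulaSteer_mul_ulaSteer, ← mul_sum, ← sum_range, norm_mul,
    norm_inv, Complex.norm_natCast]
  ring

lemma norm_one_add_lt_two {z : ℂ} (hz : ‖z‖ = 1) (hz1 : z ≠ 1) : ‖1 + z‖ < 2 := by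
  have hray : ¬SameRay ℝ 1 z := fun h => hz1 (h.eq_of_norm_eq (by rw [hz, norm_one])).symm
  simpa [hz, one_add_one_eq_two] using norm_add_lt_of_not_sameRay hray

lemma norm_geom_sum_eq_iff {z : ℂ} (hz : ‖z‖ = 1) {N : ℕ} (hN : 2 ≤ N) :
    ‖∑ i ∈ range N, z ^ i‖ = N ↔ z = 1 := by
  refine ⟨fun hsum => ?_, fun h => by simp [h]⟩
  by_contra hz1
  obtain ⟨m, rfl⟩ := Nat.exists_eq_add_of_le' hN
  have htail : ‖∑ i ∈ range m, z ^ (i + 2)‖ ≤ m := by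
    simpa [hz] using norm_sum_le (range m) fun i => z ^ (i + 2)
  have hsplit : ∑ i ∈ range (m + 2), z ^ i = ∑ i ∈ range m, z ^ (i + 2) + (1 + z) := by
    rw [sum_range_succ', sum_range_succ']
    ring
  have := norm_add_le (∑ i ∈ range m, z ^ (i + 2)) (1 + z)
  rw [← hsplit, hsum] at this
  push_cast at this
  linarith [norm_one_add_lt_two hz hz1]

lemma Complex.exp_ofReal_mul_I_eq_one_iff_of_abs_lt {ω : ℝ} (hω : |ω| < 2 * π) :
    Complex.exp (ω * Complex.I) = 1 ↔ ω = 0 := by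
  refine ⟨fun h => ?_, fun h => by simp [h]⟩
  rw [abs_lt] at hω
  rw [← Real.cos_eq_one_iff_of_lt_of_lt hω.1 hω.2, ← Complex.exp_ofReal_mul_I_re, h,
    Complex.one_re]

lemma Real.abs_sin_lt_one_of_mem_Ioo {θ : ℝ} (hθ : θ ∈ Set.Ioo (-(π / 2)) (π / 2)) :
    |sin θ| < 1 := by
  rw [← sq_lt_one_iff_abs_lt_one]
  nlinarith [sin_sq_add_cos_sq θ, cos_pos_of_mem_Ioo hθ]

lemma abs_phase_sub_lt_two_pi {Δr : ℝ} (hΔr : |Δr| ≤ 1 / 2) {θi θj : ℝ}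
    (hθi : θi ∈ Set.Ioo (-(π / 2)) (π / 2)) (hθj : θj ∈ Set.Ioo (-(π / 2)) (π / 2)) :
    |2 * π * Δr * (sin θj - sin θi)| < 2 * π := by
  have hsin : |sin θj - sin θi| < 2 := by
    linarith [abs_sub (sin θj) (sin θi), abs_sin_lt_one_of_mem_Ioo hθi,
      abs_sin_lt_one_of_mem_Ioo hθj]
  rw [abs_mul, abs_mul, abs_of_pos two_pi_pos]
  calc 2 * π * |Δr| * |sin θj - sin θi| ≤ 2 * π * (1 / 2) * |sin θj - sin θi| := by gcongr
    _ < 2 * π * (1 / 2) * 2 := by gcongr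
    _ = 2 * π := by ring

/-- if `0 < Δr ≤ 1/2` and `N_a ≥ 2`, then for all
`θ_i, θ_j ∈ (−π/2, π/2)`, `ā(θ_i, θ_j) = 1` iff `θ_i = θ_j`. -/
theorem ula_no_ambiguity_half_wavelength (Na : ℕ) (hNa : 2 ≤ Na)
    (Δr : ℝ) (hΔr : 0 < Δr) (hΔr' : Δr ≤ 1 / 2)
    (θi θj : ℝ) (hθi : θi ∈ Set.Ioo (-(π / 2)) (π / 2))
    (hθj : θj ∈ Set.Ioo (-(π / 2)) (π / 2)) :
    abar Δr Na θi θj = 1 ↔ θi = θj := by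
  have hNa0 : (Na : ℝ) ≠ 0 := by positivity
  have hphase := abs_phase_sub_lt_two_pi (by rwa [abs_of_pos hΔr]) hθi hθj
  rw [abar_eq_norm_geom_sum_div, div_eq_one_iff_eq hNa0,
    norm_geom_sum_eq_iff (Complex.norm_exp_ofReal_mul_I _) hNa,
    Complex.exp_ofReal_mul_I_eq_one_iff_of_abs_lt hphase, mul_eq_zero, sub_eq_zero]
  have hscale : 2 * π * Δr ≠ 0 := by positivity
  constructor
  · intro h
    exact injOn_sin ⟨hθi.1.le, hθi.2.le⟩ ⟨hθj.1.le, hθj.2.le⟩ (h.resolve_left hscale).symm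
  · rintro rfl
    exact Or.inr rfl
end

section
/- For all real z, θ_i, θ_j, the absolute values of the following two integrals coincide: |∫_0^{2π} exp(−i·z·(cos(γ − θ_i) − cos(γ − θ_j))) dγ| = |∫_0^{2π} exp(−2i·z·|sin((θ_j − θ_i)/2)|·sin γ) dγ|. (This reduces the continuous-aperture UCA angular similarity to the Bessel integral form |J_0(2z·|sin((θ_i − θ_j)/2)|)|.) -/
open Real

/-! By the sum-to-product formula the phase `-z (cos (γ - θi) - cos (γ - θj))` equals
`2 z sin ((θj - θi)/2) · sin (γ - (θi + θj)/2)`. Integrating over a full period removes the shift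
of `γ`, so both integrals are Bessel integrals `∫₀^{2π} exp (i a sin γ) dγ`, with `a` differing
only in sign; and `a ↦ -a` is the shift `γ ↦ γ - π`. -/

theorem Function.Periodic.intervalIntegral_comp_sub_eq {E : Type*} [NormedAddCommGroup E]
    [NormedSpace ℝ E] {f : ℝ → E} {T : ℝ} (hf : Function.Periodic f T) (t c : ℝ) :
    ∫ x in t..t + T, f (x - c) = ∫ x in t..t + T, f x := by
  rw [intervalIntegral.integral_comp_sub_right, ← sub_add_eq_add_sub]
  exact hf.intervalIntegral_add_eq (t - c) t

/-- Bessel's integral, equal to `2π J₀(a)`. -/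
noncomputable def besselIntegral (a : ℝ) : ℂ :=
  ∫ γ in (0 : ℝ)..(2 * π), Complex.exp (((a * Real.sin γ : ℝ) : ℂ) * Complex.I)

theorem integral_exp_mul_sin_sub_eq_besselIntegral (a c : ℝ) :
    ∫ γ in (0 : ℝ)..(2 * π), Complex.exp (((a * Real.sin (γ - c) : ℝ) : ℂ) * Complex.I) =
      besselIntegral a := by
  have := (Real.sin_periodic.comp fun s : ℝ => Complex.exp (((a * s : ℝ) : ℂ) *
    Complex.I)).intervalIntegral_comp_sub_eq 0 c
  rwa [zero_add] at this

theorem besselIntegral_neg (a : ℝ) : besselIntegral (-a) = besselIntegral a := by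
  rw [← integral_exp_mul_sin_sub_eq_besselIntegral a π, besselIntegral]
  simp only [Real.sin_sub_pi, neg_mul, mul_neg]

theorem besselIntegral_mul_abs (b s : ℝ) : besselIntegral (b * |s|) = besselIntegral (b * s) := by
  rcases abs_choice s with h | h <;> rw [h]
  rw [mul_neg, besselIntegral_neg]

theorem neg_mul_cos_sub_sub_cos_sub (z γ θi θj : ℝ) :
    -(z * (Real.cos (γ - θi) - Real.cos (γ - θj))) =
      2 * z * Real.sin ((θj - θi) / 2) * Real.sin (γ - (θi + θj) / 2) := by
  rw [Real.cos_sub_cos]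
  ring_nf

/-- for all real `z, θ_i, θ_j`,
`|∫_0^{2π} exp(−i·z·(cos(γ−θ_i) − cos(γ−θ_j))) dγ|
  = |∫_0^{2π} exp(−2i·z·|sin((θ_j−θ_i)/2)|·sin γ) dγ|`. -/
theorem uca_integral_bessel_form (z θi θj : ℝ) :
    ‖(∫ γ in (0 : ℝ)..(2 * π),
        Complex.exp (((-(z * (Real.cos (γ - θi) - Real.cos (γ - θj))) : ℝ) : ℂ)
          * Complex.I))‖ =
      ‖(∫ γ in (0 : ℝ)..(2 * π),
        Complex.exp (((-(2 * z * |Real.sin ((θj - θi) / 2)| * Real.sin γ) : ℝ) : ℂ)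
          * Complex.I))‖ := by
  simp_rw [neg_mul_cos_sub_sub_cos_sub, ← mul_neg, ← Real.sin_sub_pi,
    integral_exp_mul_sin_sub_eq_besselIntegral, besselIntegral_mul_abs]
end

section
/- For every real w, the integral ∫_0^{2π} exp(−i·w·sin γ) dγ is real and equals ∫_0^{2π} cos(w·sin γ) dγ; moreover, if w ≠ 0, then |∫_0^{2π} cos(w·sin γ) dγ| < 2π. (Hence the continuous-aperture UCA angular similarity (1/(2π))·|∫_0^{2π} exp(−i·w·sin γ) dγ| is strictly less than 1 whenever w ≠ 0, so the continuous UCA has no angular ambiguity: distinct azimuths modulo 2π yield similarity strictly below 1.) -/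
open Real

lemma sin_integral_zero (w : ℝ) :
    (∫ γ in (0 : ℝ)..(2 * π), Real.sin (-(w * Real.sin γ))) = 0 := by
  have h := intervalIntegral.integral_comp_sub_left
    (a := (0:ℝ)) (b := 2 * π) (fun γ => Real.sin (-(w * Real.sin γ))) (2 * π)
  simp only [sub_self, sub_zero] at h
  have h2 : (∫ γ in (0 : ℝ)..(2 * π), Real.sin (-(w * Real.sin (2 * π - γ)))) =
      ∫ γ in (0 : ℝ)..(2 * π), -Real.sin (-(w * Real.sin γ)) := by
    apply intervalIntegral.integral_congr
    intro x hx
    simp [Real.sin_two_pi_sub]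
  rw [h2, intervalIntegral.integral_neg] at h
  linarith

/-- for every real `w`, `∫_0^{2π} exp(−i·w·sin γ) dγ` is real and equals
`∫_0^{2π} cos(w·sin γ) dγ`; moreover, if `w ≠ 0` then `|∫_0^{2π} cos(w·sin γ) dγ| < 2π`. -/
theorem uca_bessel_integral_real_and_lt (w : ℝ) :
    (∫ γ in (0 : ℝ)..(2 * π),
        Complex.exp (((-(w * Real.sin γ) : ℝ) : ℂ) * Complex.I)) =
      (((∫ γ in (0 : ℝ)..(2 * π), Real.cos (w * Real.sin γ)) : ℝ) : ℂ) ∧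
    (w ≠ 0 → |∫ γ in (0 : ℝ)..(2 * π), Real.cos (w * Real.sin γ)| < 2 * π) := by
  constructor
  · have hrw : ∀ γ : ℝ, Complex.exp (((-(w * Real.sin γ) : ℝ) : ℂ) * Complex.I) =
        ((Real.cos (w * Real.sin γ) : ℝ) : ℂ) +
          ((Real.sin (-(w * Real.sin γ)) : ℝ) : ℂ) * Complex.I := by
      intro γ
      rw [Complex.exp_mul_I]
      rw [← Complex.ofReal_cos, ← Complex.ofReal_sin, Real.cos_neg]
    simp only [hrw]
    rw [intervalIntegral.integral_add, intervalIntegral.integral_mul_const,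
      intervalIntegral.integral_ofReal, intervalIntegral.integral_ofReal,
      sin_integral_zero]
    · simp
    · exact (Complex.continuous_ofReal.comp
        (Real.continuous_cos.comp (continuous_const.mul Real.continuous_sin))).intervalIntegrable _ _
    · exact ((Complex.continuous_ofReal.comp
        (Real.continuous_sin.comp (continuous_const.mul Real.continuous_sin).neg)).mul
        continuous_const).intervalIntegrable _ _
  · intro hw
    have hπ : (0:ℝ) < 2 * π := by positivity
    have hcont : ContinuousOn (fun γ => Real.cos (w * Real.sin γ)) (Set.Icc 0 (2 * π)) :=
      (Real.continuous_cos.comp (continuous_const.mul Real.continuous_sin)).continuousOn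
    have hub : (∫ γ in (0 : ℝ)..(2 * π), Real.cos (w * Real.sin γ)) <
        ∫ _ in (0 : ℝ)..(2 * π), (1:ℝ) := by
      apply intervalIntegral.integral_lt_integral_of_continuousOn_of_le_of_exists_lt hπ hcont
        continuousOn_const (fun x _ => Real.cos_le_one _)
      -- pick γ₀ with sin γ₀ = min 1 (π / |w|)
      set s : ℝ := min 1 (π / |w|) with hs
      have hwpos : 0 < |w| := abs_pos.mpr hw
      have hs0 : 0 < s := lt_min one_pos (by positivity)
      have hs1 : s ≤ 1 := min_le_left _ _
      refine ⟨Real.arcsin s, ⟨Real.arcsin_nonneg.mpr hs0.le,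
        (Real.arcsin_le_pi_div_two s).trans (by nlinarith [Real.pi_pos])⟩, ?_⟩
      have hsin : Real.sin (Real.arcsin s) = s := Real.sin_arcsin (by linarith) hs1
      rw [hsin]
      have hne : w * s ≠ 0 := mul_ne_zero hw hs0.ne'
      have habs : |w * s| ≤ π := by
        rw [abs_mul, abs_of_pos hs0]
        calc |w| * s ≤ |w| * (π / |w|) := by
              exact mul_le_mul_of_nonneg_left (min_le_right _ _) hwpos.le
          _ = π := by field_simp
      have hlt : -(2 * π) < w * s ∧ w * s < 2 * π := by
        rw [abs_le] at habs
        constructor <;> nlinarith [Real.pi_pos]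
      have := Real.cos_eq_one_iff_of_lt_of_lt hlt.1 hlt.2
      exact lt_of_le_of_ne (Real.cos_le_one _) (fun h => hne (this.mp h))
    have hlb : (∫ _ in (0 : ℝ)..(2 * π), (-1:ℝ)) <
        ∫ γ in (0 : ℝ)..(2 * π), Real.cos (w * Real.sin γ) := by
      apply intervalIntegral.integral_lt_integral_of_continuousOn_of_le_of_exists_lt hπ
        continuousOn_const hcont (fun x _ => Real.neg_one_le_cos _)
      exact ⟨0, ⟨le_refl 0, by positivity⟩, by norm_num⟩
    simp only [intervalIntegral.integral_const, smul_eq_mul, sub_zero, mul_one] at hub hlb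
    rw [abs_lt]
    constructor <;> nlinarith
end
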